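/- Let M be a map and let E0 = {s1,s2} be an interface edge of M whose edge-sides lie in two different faces F1 and F2 of respective sizes 2r and 2s. Then the faces of M \ E0 are obtained from the faces of M by replacing F1 and F2 by a single face of size 2(r+s−1), all other faces of M being unchanged. -/

import Mathlib

open Equiv Polynomial

open scoped Classical

noncomputable section

variable {α : Type*}

/-- `f` is a *pairing* of the finite set `S`: an involution of the ambient type which
moves exactly the elements of `S` (i.e., a fixpoint-free involution of `S`, extended by
the identity outside of `S`); the pairs of the pairing are the orbits `{a, f a}`. -/
def IsPairing (S : Finset α) (f : Equiv.Perm α) : Prop :=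
  (∀ a, f (f a) = a) ∧ ∀ a, f a ≠ a ↔ a ∈ S

/-- The pairing `P_{{s₁,s₂}}` obtained from the pairing `f` by removing the elements
`s₁, s₂` : if `{s₁,s₂}` is a pair of `f` it is simply deleted; otherwise the pairs
containing `s₁` and `s₂` are deleted and the partners `f s₁`, `f s₂` are matched
together. -/
def removeP (f : Equiv.Perm α) (s₁ s₂ : α) : Equiv.Perm α :=
  Equiv.swap s₁ s₂ * Equiv.swap s₁ (f s₂) * Equiv.swap s₂ (f s₁) * f

/-- `t` lies in the polygon of `L(b,w)` containing `s`, in *even position* with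
respect to `s`: `t` is obtained from `s` by an odd alternating word in the
involutions `b` and `w`. -/
def EvenPos (b w : Equiv.Perm α) (s t : α) : Prop :=
  ∃ j : ℤ, t = ((w * b) ^ j * b) s

/-- `t` lies in the polygon of `L(b,w)` containing `s`, in *odd position* with respect
to `s`: `t` is obtained from `s` by an even alternating word in the involutions
`b` and `w`. -/
def OddPos (b w : Equiv.Perm α) (s t : α) : Prop :=
  ∃ j : ℤ, t = ((w * b) ^ j) s

/-- `s` and `t` lie in the same polygon of `L(b,w)`. -/
def SameFace (b w : Equiv.Perm α) (s t : α) : Prop :=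
  EvenPos b w s t ∨ OddPos b w s t

/-- The edge `{s,t}` is *straight*: both edge-sides lie in the same face,
in even position. -/
def IsStraight (b w : Equiv.Perm α) (s t : α) : Prop :=
  SameFace b w s t ∧ EvenPos b w s t

/-- The edge `{s,t}` is *twisted*: both edge-sides lie in the same face,
in odd position. -/
def IsTwisted (b w : Equiv.Perm α) (s t : α) : Prop :=
  SameFace b w s t ∧ OddPos b w s t

/-- The edge `{s,t}` is an *interface* edge: its edge-sides lie in two
different faces. -/
def IsInterface (b w : Equiv.Perm α) (s t : α) : Prop :=
  ¬ SameFace b w s t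

/-- The polygon (face) of `L(b,w)` containing `s`, as the set of its edge-sides. -/
def faceOf (S : Finset α) (b w : Equiv.Perm α) (s : α) : Finset α :=
  S.filter (SameFace b w s)

/-- The collection of polygons (faces) of `L(b,w)`. -/
def faces (S : Finset α) (b w : Equiv.Perm α) : Finset (Finset α) :=
  S.image (faceOf S b w)

/-- The number of polygons (faces) of `L(b,w)`. -/
def numFaces (S : Finset α) (b w : Equiv.Perm α) : ℕ :=
  (faces S b w).card

/-- The *type* of the couple of pairings `(b,w)`: the multiset of half-lengths of the
polygons of `L(b,w)`. -/
def faceType (S : Finset α) (b w : Equiv.Perm α) : Multiset ℕ :=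
  (faces S b w).val.map fun F => F.card / 2

/-- `s` and `t` lie in the same connected component of the map `(b,w,e)`:
`t` is obtained from `s` by applying partner maps in `b`, `w`, `e` repeatedly. -/
def SameComponent (b w e : Equiv.Perm α) (s t : α) : Prop :=
  ∃ g ∈ Subgroup.closure ({b, w, e} : Set (Equiv.Perm α)), g s = t

/-- The number of connected components of the map `(S, b, w, e)`. -/
def numComponents (S : Finset α) (b w e : Equiv.Perm α) : ℕ :=
  (S.image fun s => S.filter (SameComponent b w e s)).card

/-- The number of vertices of the map `(S, b, w, e)`: black vertices are the polygons
of `L(b,e)`, white vertices are the polygons of `L(w,e)`. -/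
def numVertices (S : Finset α) (b w e : Equiv.Perm α) : ℕ :=
  numFaces S b e + numFaces S w e

/-- The number of edges of a map with edge-side set `S`. -/
def numEdges (S : Finset α) : ℕ := S.card / 2

/-- The Euler characteristic `χ(M) = |V(M)| - |E(M)| + |F(M)|` of the map
`M = (S, b, w, e)`. -/
def eulerChar (S : Finset α) (b w e : Equiv.Perm α) : ℤ :=
  (numVertices S b w e : ℤ) - (numEdges S : ℤ) + (numFaces S b w : ℤ)

/-- The quantity `d(M) = 2·(number of connected components of M) - χ(M)`. -/
def dInv (S : Finset α) (b w e : Equiv.Perm α) : ℤ :=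
  2 * (numComponents S b w e : ℤ) - eulerChar S b w e

/-- The edge `{s, e s}` of the map `(b, w, e)` is a *bridge*: either one of its
extremities is a leaf (the pair belongs to `b` or to `w` as well), or its two
extremities lie in different connected components of the map with this edge removed. -/
def IsBridge (b w e : Equiv.Perm α) (s : α) : Prop :=
  (b s = e s ∨ w s = e s) ∨
    ¬ SameComponent (removeP b s (e s)) (removeP w s (e s)) (removeP e s (e s))
        (b s) (w s)

/-- The weight of the edge `{s,t}` in the map with face structure given by `(b,w)`,
as a polynomial in the variable `γ` (over `ℚ`): `1` for a straight edge, `γ` for a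
twisted edge, `1/2` for an interface edge. -/
def edgeWeight (b w : Equiv.Perm α) (s t : α) : Polynomial ℚ :=
  if IsStraight b w s t then 1
  else if IsTwisted b w s t then Polynomial.X
  else Polynomial.C (1 / 2)

/-- The weight `w_{M,≺}` of a map `(b,w,e)` equipped with a history, the latter
encoded as the list of the edges in increasing order (each edge represented by one
of its edge-sides): the product of the weights of the edges, each weight being
computed in the map in which all previous edges have already been removed. -/
def histWeight : Equiv.Perm α → Equiv.Perm α → Equiv.Perm α → List α → Polynomial ℚ
  | _, _, _, [] => 1
  | b, w, e, s :: L =>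
      edgeWeight b w s (e s) *
        histWeight (removeP b s (e s)) (removeP w s (e s)) (removeP e s (e s)) L

/-- `L` encodes a *history* (a linear order on the edges) of the map with edge-side
set `S` and edge pairing `e`: it lists every edge exactly once, each edge being
represented by its smaller edge-side. -/
def IsHistory [LinearOrder α] (S : Finset α) (e : Equiv.Perm α) (L : List α) : Prop :=
  L.Nodup ∧ (∀ s ∈ L, s ∈ S ∧ s < e s) ∧ ∀ a ∈ S, a ∈ L ∨ e a ∈ L

/-- The *measure of non-orientability* `w_M` of the map `(S,b,w,e)`: the average of
`w_{M,≺}` over all `n!` histories `≺`, as a polynomial in the variable `γ` over `ℚ`. -/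
def mapWeight [LinearOrder α] (S : Finset α) (b w e : Equiv.Perm α) : Polynomial ℚ :=
  Polynomial.C (1 / ((numEdges S).factorial : ℚ)) *
    ∑ F ∈ (Fintype.piFinset fun _ : Fin (numEdges S) => S).filter
        (fun F => IsHistory S e (List.ofFn F)),
      histWeight b w e (List.ofFn F)

/-- The number of embeddings `N_M(λ)` of the underlying bipartite graph of the map
`(S,b,w,e)` into the Young diagram whose list of row lengths is `lam`: an embedding
maps black vertices (polygons of `L(b,e)`) to rows, white vertices (polygons of
`L(w,e)`) to columns, and each edge to the box at the corresponding intersection;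
it is encoded by a pair of functions on edge-sides that are constant on vertices. -/
def NMap (lam : List ℕ) (S : Finset α) (b w e : Equiv.Perm α) : ℕ :=
  Nat.card {fp : (α → ℕ) × (α → ℕ) //
    (∀ s, s ∉ S → fp.1 s = 0 ∧ fp.2 s = 0) ∧
    (∀ s ∈ S, fp.1 (b s) = fp.1 s ∧ fp.1 (e s) = fp.1 s) ∧
    (∀ s ∈ S, fp.2 (w s) = fp.2 s ∧ fp.2 (e s) = fp.2 s) ∧
    ∀ s ∈ S, fp.2 s < lam.getD (fp.1 s) 0}

/-- The orientability generating series `\widehat{Ch}^{(α)}_π(λ)`, where the face-type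
`π` is realized by the fixed couple of pairings `(b,w)` of `S`, `lam` is the list of
row lengths of the Young diagram `λ`, and `a` is the Jack parameter `α`: the sum over
all pairings `e` of `S` (i.e., over all maps of face-type `π`) of
`(-1/√α)^{|V_•(M)|} (√α)^{|V_∘(M)|} w_M N_M(λ)`, times the sign `(-1)^{ℓ(π)}`,
where `w_M` is evaluated at `γ = (1-α)/√α`. -/
def genSeries [Fintype α] [LinearOrder α] (lam : List ℕ) (S : Finset α)
    (b w : Equiv.Perm α) (a : ℝ) : ℝ :=
  (-1 : ℝ) ^ numFaces S b w *
    ∑ e ∈ Finset.univ.filter fun e : Equiv.Perm α => IsPairing S e,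
      (-1 / Real.sqrt a) ^ numFaces S b e * (Real.sqrt a) ^ numFaces S w e *
        Polynomial.aeval ((1 - a) / Real.sqrt a) (mapWeight S b w e) *
          (NMap lam S b w e : ℝ)

/-- The number of embeddings `N_G(λ)` of the bipartite graph `G` with black vertex set
`ι`, white vertex set `κ` and edge relation `Edg` into the Young diagram whose list of
row lengths is `lam`: black vertices are mapped to rows of `λ`, white vertices to
columns of `λ`, and every edge to the box at the corresponding intersection, which
must belong to `λ`. -/
def NGraph {ι κ : Type*} (lam : List ℕ) (Edg : ι → κ → Prop) : ℕ :=
  Nat.card {fp : (ι → ℕ) × (κ → ℕ) //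
    (∀ u, 0 < lam.getD (fp.1 u) 0) ∧
    (∀ v, ∃ i, fp.2 v < lam.getD i 0) ∧
    ∀ u v, Edg u v → fp.2 v < lam.getD (fp.1 u) 0}

/-! Faces are the classes of the relation generated by the steps `x ↦ b x` and `x ↦ w x`.
The pairing `removeP b s₁ s₂` is `b` followed by three transpositions of edge-sides of `F₁ ∪ F₂`,
and likewise for `w`, so each face of `M \ E₀` lies in a face of `M` or in `F₁ ∪ F₂`.
Conversely, the steps of `M` avoiding `s₁, s₂` survive; a polygon minus one edge-side is still
connected, so `b sᵢ` and `w sᵢ` stay in one face, and the new pair `{b s₁, b s₂}` joins what is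
left of `F₁` and `F₂`. -/

open Function Relation

section RemoveP

variable {f : Perm α} {s₁ s₂ a : α}

theorem removeP_apply_of_ne (ha₁ : a ≠ s₁) (ha₂ : a ≠ s₂) (hfa₁ : f a ≠ s₁)
    (hfa₂ : f a ≠ s₂) : removeP f s₁ s₂ a = f a := by
  simp [removeP, swap_apply_of_ne_of_ne, ha₁, ha₂, hfa₁, hfa₂]

theorem removeP_apply_left (h₁₂ : s₁ ≠ s₂) (h₂ : f s₂ ≠ s₂) : removeP f s₁ s₂ s₁ = s₁ := by
  simp [removeP, swap_apply_of_ne_of_ne, h₁₂.symm, h₂.symm]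

theorem removeP_apply_right (h₁₂ : s₁ ≠ s₂) (h₂ : f s₂ ≠ s₂) : removeP f s₁ s₂ s₂ = s₂ := by
  simp [removeP, swap_apply_of_ne_of_ne, h₁₂.symm, h₂]

theorem removeP_apply_apply_left (hf : Involutive f) (h₁₂ : s₁ ≠ s₂) (h₁ : f s₁ ≠ s₁)
    (h₂₁ : f s₂ ≠ s₁) (h₂ : f s₂ ≠ s₂) : removeP f s₁ s₂ (f s₁) = f s₂ := by
  simp [removeP, swap_apply_of_ne_of_ne, hf s₁, h₁₂, h₁.symm, h₂₁, h₂]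

theorem removeP_apply_apply_right (hf : Involutive f) (h₁₂ : s₁ ≠ s₂) (h₁ : f s₁ ≠ s₁)
    (h₁₂' : f s₁ ≠ s₂) : removeP f s₁ s₂ (f s₂) = f s₁ := by
  simp [removeP, swap_apply_of_ne_of_ne, hf s₂, hf.injective.ne h₁₂, h₁, h₁₂']

theorem Function.Involutive.removeP (hf : Involutive f) (h₁₂ : s₁ ≠ s₂) (h₁ : f s₁ ≠ s₁)
    (h₂ : f s₂ ≠ s₂) : Involutive (removeP f s₁ s₂) := by
  intro a
  by_cases ha₁ : a = s₁
  · rw [ha₁, removeP_apply_left h₁₂ h₂, removeP_apply_left h₁₂ h₂]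
  by_cases ha₂ : a = s₂
  · rw [ha₂, removeP_apply_right h₁₂ h₂, removeP_apply_right h₁₂ h₂]
  by_cases hfs₁ : a = f s₁
  · have h₂₁ : f s₂ ≠ s₁ := fun h => ha₂ (by rw [hfs₁, ← h, hf])
    rw [hfs₁, removeP_apply_apply_left hf h₁₂ h₁ h₂₁ h₂,
      removeP_apply_apply_right hf h₁₂ h₁ (fun h => ha₂ (hfs₁.trans h))]
  by_cases hfs₂ : a = f s₂
  · have h₁₂' : f s₁ ≠ s₂ := fun h => ha₁ (by rw [hfs₂, ← h, hf])
    rw [hfs₂, removeP_apply_apply_right hf h₁₂ h₁ h₁₂',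
      removeP_apply_apply_left hf h₁₂ h₁ (fun h => ha₁ (hfs₂.trans h)) h₂]
  have hfa₁ : f a ≠ s₁ := fun h => hfs₁ (hf.eq_iff.1 h)
  have hfa₂ : f a ≠ s₂ := fun h => hfs₂ (hf.eq_iff.1 h)
  rw [removeP_apply_of_ne ha₁ ha₂ hfa₁ hfa₂,
    removeP_apply_of_ne hfa₁ hfa₂ (by rwa [hf]) (by rwa [hf]), hf]

end RemoveP

theorem Equivalence.rel_swap_apply {r : α → α → Prop} (hr : Equivalence r) {a b : α}
    (hab : r a b) (x : α) : r x (swap a b x) := by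
  rcases eq_or_ne x a with rfl | hxa
  · simpa using hab
  rcases eq_or_ne x b with rfl | hxb
  · simpa using hr.symm hab
  · rw [swap_apply_of_ne_of_ne hxa hxb]
    exact hr.refl x

theorem Equivalence.rel_removeP_apply {r : α → α → Prop} (hr : Equivalence r) {f : Perm α}
    {s₁ s₂ : α} (hf : ∀ x, r x (f x)) (h₁₂ : r s₁ s₂) (h₁ : r s₁ (f s₂)) (h₂ : r s₂ (f s₁))
    (x : α) : r x (removeP f s₁ s₂ x) :=
  hr.trans (hf x) <| hr.trans (hr.rel_swap_apply h₂ _) <|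
    hr.trans (hr.rel_swap_apply h₁ _) (hr.rel_swap_apply h₁₂ _)

namespace IsPairing

variable {S : Finset α} {f b w : Perm α} {s₁ s₂ : α}

theorem apply_ne (hf : IsPairing S f) {a : α} (ha : a ∈ S) : f a ≠ a := (hf.2 a).2 ha

theorem apply_mem_iff (hf : IsPairing S f) (a : α) : f a ∈ S ↔ a ∈ S := by
  rw [← hf.2, ← hf.2, hf.1, ne_comm]

theorem mul_apply_mem_iff (hb : IsPairing S b) (hw : IsPairing S w) (a : α) :
    (w * b) a ∈ S ↔ a ∈ S :=
  (hw.apply_mem_iff _).trans (hb.apply_mem_iff a)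

theorem removeP_involutive (hf : IsPairing S f) (hs₁ : s₁ ∈ S) (hs₂ : s₂ ∈ S)
    (h₁₂ : s₁ ≠ s₂) : Involutive (removeP f s₁ s₂) :=
  Involutive.removeP hf.1 h₁₂ (hf.apply_ne hs₁) (hf.apply_ne hs₂)

end IsPairing

namespace Equiv.Perm

variable {S : Finset α} {c : Perm α}

theorem zpow_apply_mem_iff (hc : ∀ a, c a ∈ S ↔ a ∈ S) (j : ℤ) (a : α) :
    (c ^ j) a ∈ S ↔ a ∈ S := by
  induction j using Int.induction_on generalizing a with
  | zero => simp
  | succ k ih => rw [zpow_add_one, mul_apply, ih, hc]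
  | pred k ih => rw [zpow_sub_one, mul_apply, ih, ← hc]; simp

theorem exists_pos_pow_apply_eq (hc : ∀ a, c a ∈ S ↔ a ∈ S) {a : α} (ha : a ∈ S) :
    ∃ n, 0 < n ∧ (c ^ n) a = a := by
  refine ⟨orderOf (c.subtypePerm hc), orderOf_pos _, ?_⟩
  have h := pow_orderOf_eq_one (c.subtypePerm hc)
  rw [subtypePerm_pow] at h
  exact congrArg (fun p : Perm S => (p ⟨a, ha⟩ : α)) h

theorem apply_zpow_apply {b w : Perm α} (hb : Involutive b) (hw : Involutive w) (j : ℤ)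
    (x : α) : b (((w * b) ^ j) x) = ((w * b) ^ (-j)) (b x) := by
  have hinv : ∀ {f : Perm α}, Involutive f → f⁻¹ = f := fun hf =>
    inv_eq_of_mul_eq_one_right (Equiv.ext hf)
  have h : SemiconjBy b (w * b) (w * b)⁻¹ := by
    rw [mul_inv_rev, hinv hb, hinv hw]
    exact (mul_assoc b w b).symm
  have h' := (h.zpow_right j).eq
  rw [inv_zpow'] at h'
  exact Perm.ext_iff.1 h' x

end Equiv.Perm

def FaceAdj (b w : Perm α) (x y : α) : Prop := y = b x ∨ y = w x

section SameFace

variable {b w : Perm α} {s t u : α}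

theorem FaceAdj.symm (hb : Involutive b) (hw : Involutive w) (h : FaceAdj b w s t) :
    FaceAdj b w t s := by
  rcases h with rfl | rfl
  exacts [Or.inl (hb s).symm, Or.inr (hw s).symm]

theorem reflTransGen_faceAdj_symm (hb : Involutive b) (hw : Involutive w)
    (h : ReflTransGen (FaceAdj b w) s t) : ReflTransGen (FaceAdj b w) t s :=
  have : Std.Symm (FaceAdj b w) := ⟨fun _ _ h => h.symm hb hw⟩
  Std.Symm.symm _ _ h

theorem sameFace_apply_left (x : α) : SameFace b w x (b x) := Or.inl ⟨0, rfl⟩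

theorem sameFace_apply_right (hb : Involutive b) (x : α) : SameFace b w x (w x) :=
  Or.inl ⟨1, by rw [zpow_one, Perm.mul_apply, Perm.mul_apply, hb]⟩

theorem SameFace.of_faceAdj (hb : Involutive b) (hw : Involutive w) (h : SameFace b w s t)
    (ht : FaceAdj b w t u) : SameFace b w s u := by
  have hb_step : ∀ {t}, SameFace b w s t → SameFace b w s (b t) := by
    rintro _ (⟨j, rfl⟩ | ⟨j, rfl⟩)
    · exact Or.inr ⟨-j, by rw [Perm.mul_apply, Perm.apply_zpow_apply hb hw, hb]⟩
    · exact Or.inl ⟨-j, by rw [Perm.apply_zpow_apply hb hw]; rfl⟩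
  have hwb_step : ∀ {t}, SameFace b w s t → SameFace b w s ((w * b) t) := by
    rintro _ (⟨j, rfl⟩ | ⟨j, rfl⟩)
    · exact Or.inl ⟨1 + j, by rw [zpow_one_add]; rfl⟩
    · exact Or.inr ⟨1 + j, by rw [zpow_one_add]; rfl⟩
  rcases ht with rfl | rfl
  · exact hb_step h
  · simpa [hb t] using hwb_step (hb_step h)

theorem reflTransGen_faceAdj_zpow_apply (hb : Involutive b) (hw : Involutive w) (j : ℤ)
    (x : α) : ReflTransGen (FaceAdj b w) x (((w * b) ^ j) x) := by
  have step : ∀ y, ReflTransGen (FaceAdj b w) y ((w * b) y) := fun y =>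
    (ReflTransGen.single (show FaceAdj b w y (b y) from Or.inl rfl)).tail (Or.inr rfl)
  induction j using Int.induction_on with
  | zero => rfl
  | succ k ih => rw [add_comm, zpow_one_add, Perm.mul_apply]; exact ih.trans (step _)
  | pred k ih =>
    refine ih.trans (reflTransGen_faceAdj_symm hb hw ?_)
    simpa [← Perm.mul_apply, ← zpow_one_add] using step (((w * b) ^ (-(k : ℤ) - 1)) x)

theorem sameFace_iff_reflTransGen (hb : Involutive b) (hw : Involutive w) :
    SameFace b w s t ↔ ReflTransGen (FaceAdj b w) s t := by
  constructor
  · rintro (⟨j, rfl⟩ | ⟨j, rfl⟩)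
    · exact (ReflTransGen.single (show FaceAdj b w s (b s) from Or.inl rfl)).trans
        (reflTransGen_faceAdj_zpow_apply hb hw j _)
    · exact reflTransGen_faceAdj_zpow_apply hb hw j s
  · intro h
    induction h with
    | refl => exact Or.inr ⟨0, rfl⟩
    | tail _ hadj ih => exact ih.of_faceAdj hb hw hadj

theorem sameFace_equivalence (hb : Involutive b) (hw : Involutive w) :
    Equivalence (SameFace b w) := by
  have : SameFace b w = ReflTransGen (FaceAdj b w) := by
    ext s t
    exact sameFace_iff_reflTransGen hb hw
  rw [this]
  exact ⟨fun _ => .refl, reflTransGen_faceAdj_symm hb hw, .trans⟩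

end SameFace

section Polygon

variable {S : Finset α} {b w : Perm α} {x : α}

/-- Otherwise `b` or `w` would fix the edge-side halfway between `x` and `b x` along the
polygon. -/
theorem zpow_apply_ne_apply (hb : IsPairing S b) (hw : IsPairing S w) (hx : x ∈ S) (j : ℤ) :
    ((w * b) ^ j) x ≠ b x := by
  intro h
  obtain ⟨k, hk⟩ := Int.even_or_odd' j
  set y := ((w * b) ^ k) x
  have hy : y ∈ S := (Perm.zpow_apply_mem_iff (hb.mul_apply_mem_iff hw) k x).2 hx
  have hby : b y = ((w * b) ^ (j - k)) x := by
    rw [Perm.apply_zpow_apply hb.1 hw.1, ← h, ← Perm.mul_apply, ← zpow_add, neg_add_eq_sub]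
  rcases hk with rfl | rfl
  · exact hb.apply_ne hy (by rw [hby, show 2 * k - k = k by ring])
  · refine hw.apply_ne ((hb.apply_mem_iff y).2 hy) ?_
    have hwby : w (b y) = ((w * b) ^ (1 + k)) x := by rw [zpow_one_add]; rfl
    rw [hwby, hby, show 2 * k + 1 - k = 1 + k by ring]

/-- Walk from `w x` along the powers of `w * b` until `b x` is first reached: by
`zpow_apply_ne_apply` the walk never meets `x`. -/
theorem reflTransGen_faceAdj_erase (hb : IsPairing S b) (hw : IsPairing S w) (hx : x ∈ S) :
    ReflTransGen (fun t u => FaceAdj b w t u ∧ t ≠ x ∧ u ≠ x ∧ SameFace b w x t)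
      (w x) (b x) := by
  have hbx : b x ∈ S := (hb.apply_mem_iff x).2 hx
  have hwx : w x = (w * b) (b x) := by rw [Perm.mul_apply, hb.1]
  have hex : ∃ k, ((w * b) ^ k) (w x) = b x := by
    obtain ⟨n, hn, hper⟩ := Perm.exists_pos_pow_apply_eq (hb.mul_apply_mem_iff hw) hbx
    refine ⟨n - 1, ?_⟩
    rw [hwx, ← Perm.mul_apply, ← pow_succ, Nat.sub_add_cancel hn, hper]
  have hshift : ∀ k : ℕ, ((w * b) ^ k) (w x) = ((w * b) ^ ((k + 1 : ℕ) : ℤ)) (b x) := by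
    intro k
    rw [zpow_natCast, pow_succ, Perm.mul_apply, hwx]
  have hne : ∀ k : ℕ, ((w * b) ^ k) (w x) ≠ x := fun k h =>
    zpow_apply_ne_apply hb hw hbx ((k + 1 : ℕ) : ℤ) (by rw [← hshift, h, hb.1])
  have hface : ∀ k : ℕ, SameFace b w x (((w * b) ^ k) (w x)) := fun k =>
    Or.inl ⟨(k + 1 : ℕ), by rw [hshift]; rfl⟩
  suffices ∀ k ≤ Nat.find hex, ReflTransGen _ (w x) (((w * b) ^ k) (w x)) by
    simpa only [Nat.find_spec hex] using this _ le_rfl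
  intro k hk
  induction k with
  | zero => exact .refl
  | succ k ih =>
    set p := ((w * b) ^ k) (w x)
    have hbp : b p ≠ x := fun h => Nat.find_min hex (by omega : k < Nat.find hex)
      ((hb.1 p).symm.trans (congrArg b h))
    have hnext : ((w * b) ^ (k + 1)) (w x) = w (b p) := by rw [pow_succ', Perm.mul_apply]; rfl
    refine ((ih (by omega)).tail ⟨Or.inl rfl, hne k, hbp, hface k⟩).tail ?_
    exact ⟨Or.inr (by rw [hnext]), hbp, hnext ▸ hne (k + 1),
      (hface k).of_faceAdj hb.1 hw.1 (Or.inl rfl)⟩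

theorem sameFace_neighbours_of_faceAdj {b' w' : Perm α} (hb : IsPairing S b)
    (hw : IsPairing S w) (hb' : Involutive b') (hw' : Involutive w') (hx : x ∈ S)
    (hadj : ∀ t u, t ≠ x → u ≠ x → SameFace b w x t → FaceAdj b w t u → FaceAdj b' w' t u) :
    SameFace b' w' (w x) (b x) :=
  (sameFace_iff_reflTransGen hb' hw').2 <| ReflTransGen.mono
    (fun t u ⟨htu, ht, hu, hxt⟩ => hadj t u ht hu hxt htu) _ _
    (reflTransGen_faceAdj_erase hb hw hx)

end Polygon

section MergeClasses

variable {r r' : α → α → Prop} {s₁ s₂ t u : α}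

def MergeClasses (r : α → α → Prop) (s₁ s₂ t u : α) : Prop :=
  r t u ∨ ((r s₁ t ∨ r s₂ t) ∧ (r s₁ u ∨ r s₂ u))

theorem Equivalence.mergeClasses (hr : Equivalence r) (s₁ s₂ : α) :
    Equivalence (MergeClasses r s₁ s₂) := by
  have hP : ∀ {t u}, r t u → (r s₁ t ∨ r s₂ t → r s₁ u ∨ r s₂ u) := fun h =>
    Or.imp (hr.trans · h) (hr.trans · h)
  refine ⟨fun t => Or.inl (hr.refl t), ?_, ?_⟩
  · rintro t u (h | ⟨ht, hu⟩)
    exacts [Or.inl (hr.symm h), Or.inr ⟨hu, ht⟩]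
  · rintro t u v (h | ⟨ht, hu⟩) (h' | ⟨hu', hv⟩)
    exacts [Or.inl (hr.trans h h'), Or.inr ⟨hP (hr.symm h) hu', hv⟩, Or.inr ⟨ht, hP h' hu⟩,
      Or.inr ⟨ht, hv⟩]

theorem mergeClasses_removeP_apply (hr : Equivalence r) {f : Perm α} (hf : ∀ x, r x (f x))
    (x : α) : MergeClasses r s₁ s₂ x (removeP f s₁ s₂ x) :=
  (hr.mergeClasses s₁ s₂).rel_removeP_apply (fun x => Or.inl (hf x))
    (Or.inr ⟨Or.inl (hr.refl s₁), Or.inr (hr.refl s₂)⟩)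
    (Or.inr ⟨Or.inl (hr.refl s₁), Or.inr (hf s₂)⟩)
    (Or.inr ⟨Or.inr (hr.refl s₂), Or.inl (hf s₁)⟩) x

variable {S : Finset α}

theorem filter_sdiff_pair_of_not_mergeClasses (hr : Equivalence r)
    (hr' : ∀ t u, t ∉ ({s₁, s₂} : Finset α) → u ∉ ({s₁, s₂} : Finset α) →
      (r' t u ↔ MergeClasses r s₁ s₂ t u))
    (ht : t ∉ ({s₁, s₂} : Finset α)) (hst : ¬ (r s₁ t ∨ r s₂ t)) :
    (S \ {s₁, s₂}).filter (r' t) = S.filter (r t) := by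
  ext u
  simp only [Finset.mem_filter, Finset.mem_sdiff]
  constructor
  · rintro ⟨⟨huS, hu⟩, h⟩
    exact ⟨huS, ((hr' t u ht hu).1 h).resolve_right fun h => hst h.1⟩
  · rintro ⟨huS, h⟩
    have hu : u ∉ ({s₁, s₂} : Finset α) := by
      simp only [Finset.mem_insert, Finset.mem_singleton]
      rintro (rfl | rfl)
      exacts [hst (Or.inl (hr.symm h)), hst (Or.inr (hr.symm h))]
    exact ⟨⟨huS, hu⟩, (hr' t u ht hu).2 (Or.inl h)⟩

theorem filter_sdiff_pair_of_mergeClasses (hr : Equivalence r)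
    (hr' : ∀ t u, t ∉ ({s₁, s₂} : Finset α) → u ∉ ({s₁, s₂} : Finset α) →
      (r' t u ↔ MergeClasses r s₁ s₂ t u))
    (ht : t ∉ ({s₁, s₂} : Finset α)) (hst : r s₁ t ∨ r s₂ t) :
    (S \ {s₁, s₂}).filter (r' t) = (S.filter (r s₁) ∪ S.filter (r s₂)) \ {s₁, s₂} := by
  ext u
  simp only [Finset.mem_filter, Finset.mem_sdiff, Finset.mem_union]
  constructor
  · rintro ⟨⟨huS, hu⟩, h⟩
    refine ⟨?_, hu⟩
    rcases (hr' t u ht hu).1 h with h | ⟨-, h⟩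
    · exact hst.imp (fun h' => ⟨huS, hr.trans h' h⟩) (fun h' => ⟨huS, hr.trans h' h⟩)
    · exact h.imp (⟨huS, ·⟩) (⟨huS, ·⟩)
  · rintro ⟨hu', hu⟩
    have huS : u ∈ S := hu'.elim And.left And.left
    exact ⟨⟨huS, hu⟩, (hr' t u ht hu).2 (Or.inr ⟨hst, hu'.imp And.right And.right⟩)⟩

theorem image_filter_sdiff_pair (hr : Equivalence r)
    (hr' : ∀ t u, t ∉ ({s₁, s₂} : Finset α) → u ∉ ({s₁, s₂} : Finset α) →
      (r' t u ↔ MergeClasses r s₁ s₂ t u))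
    {t₀ : α} (ht₀ : t₀ ∈ S \ {s₁, s₂}) (hs₁t₀ : r s₁ t₀) :
    (S \ {s₁, s₂}).image (fun t => (S \ {s₁, s₂}).filter (r' t)) =
      ((S.image fun t => S.filter (r t)).erase (S.filter (r s₁))).erase (S.filter (r s₂)) ∪
        {(S.filter (r s₁) ∪ S.filter (r s₂)) \ {s₁, s₂}} := by
  ext F
  simp only [Finset.mem_union, Finset.mem_image, Finset.mem_erase, Finset.mem_singleton]
  constructor
  · rintro ⟨t, ht, rfl⟩
    obtain ⟨htS, ht⟩ := Finset.mem_sdiff.1 ht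
    by_cases hst : r s₁ t ∨ r s₂ t
    · exact Or.inr (filter_sdiff_pair_of_mergeClasses hr hr' ht hst)
    · rw [filter_sdiff_pair_of_not_mergeClasses hr hr' ht hst]
      have htt : t ∈ S.filter (r t) := Finset.mem_filter.2 ⟨htS, hr.refl t⟩
      exact Or.inl ⟨fun h => hst (Or.inr (Finset.mem_filter.1 (h ▸ htt)).2),
        fun h => hst (Or.inl (Finset.mem_filter.1 (h ▸ htt)).2), t, htS, rfl⟩
  · rintro (⟨hne₂, hne₁, t, htS, rfl⟩ | rfl)
    · have hclass : ∀ {s}, r s t → S.filter (r t) = S.filter (r s) := fun h =>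
        Finset.filter_congr fun _ _ => ⟨hr.trans h, hr.trans (hr.symm h)⟩
      have hst : ¬ (r s₁ t ∨ r s₂ t) := by
        rintro (h | h)
        exacts [hne₁ (hclass h), hne₂ (hclass h)]
      have ht : t ∉ ({s₁, s₂} : Finset α) := by
        simp only [Finset.mem_insert, Finset.mem_singleton]
        rintro (rfl | rfl)
        exacts [hst (Or.inl (hr.refl t)), hst (Or.inr (hr.refl t))]
      exact ⟨t, Finset.mem_sdiff.2 ⟨htS, ht⟩,
        filter_sdiff_pair_of_not_mergeClasses hr hr' ht hst⟩
    · exact ⟨t₀, ht₀,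
        filter_sdiff_pair_of_mergeClasses hr hr' (Finset.mem_sdiff.1 ht₀).2 (Or.inl hs₁t₀)⟩

end MergeClasses

section RemoveInterfaceEdge

variable {S : Finset α} {b w : Perm α} {s₁ s₂ t u : α}

theorem FaceAdj.removeP (h : FaceAdj b w t u) (ht₁ : t ≠ s₁) (ht₂ : t ≠ s₂) (hu₁ : u ≠ s₁)
    (hu₂ : u ≠ s₂) : FaceAdj (removeP b s₁ s₂) (removeP w s₁ s₂) t u := by
  rcases h with rfl | rfl
  exacts [Or.inl (removeP_apply_of_ne ht₁ ht₂ hu₁ hu₂).symm,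
    Or.inr (removeP_apply_of_ne ht₁ ht₂ hu₁ hu₂).symm]

theorem mergeClasses_of_sameFace_removeP (hb : Involutive b) (hw : Involutive w)
    (hb' : Involutive (removeP b s₁ s₂)) (hw' : Involutive (removeP w s₁ s₂))
    (h : SameFace (removeP b s₁ s₂) (removeP w s₁ s₂) t u) :
    MergeClasses (SameFace b w) s₁ s₂ t u := by
  have hR := sameFace_equivalence hb hw
  refine reflTransGen_le_of_equivalence_of_le (hR.mergeClasses s₁ s₂) ?_ t u
    ((sameFace_iff_reflTransGen hb' hw').1 h)
  rintro x _ (rfl | rfl)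
  exacts [mergeClasses_removeP_apply hR sameFace_apply_left x,
    mergeClasses_removeP_apply hR (sameFace_apply_right hb) x]

theorem eq_of_sameFace_of_mem_pair (hb : Involutive b) (hw : Involutive w)
    (h₁₂ : ¬ SameFace b w s₁ s₂) {z v : α} (hz : z ∈ ({s₁, s₂} : Finset α))
    (hv : v ∈ ({s₁, s₂} : Finset α)) (h : SameFace b w z v) : v = z := by
  simp only [Finset.mem_insert, Finset.mem_singleton] at hz hv
  rcases hz with rfl | rfl <;> rcases hv with rfl | rfl
  exacts [rfl, absurd h h₁₂, absurd ((sameFace_equivalence hb hw).symm h) h₁₂, rfl]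

theorem sameFace_removeP_apply_apply (hb : IsPairing S b) (hw : IsPairing S w) (hs₁ : s₁ ∈ S)
    (hs₂ : s₂ ∈ S) (h₁₂ : ¬ SameFace b w s₁ s₂) {z : α} (hz : z ∈ ({s₁, s₂} : Finset α)) :
    SameFace (removeP b s₁ s₂) (removeP w s₁ s₂) (w z) (b z) := by
  have hne : s₁ ≠ s₂ := fun h => h₁₂ (h ▸ (sameFace_equivalence hb.1 hw.1).refl s₁)
  have hzS : z ∈ S := Finset.insert_subset hs₁ (Finset.singleton_subset_iff.2 hs₂) hz
  refine sameFace_neighbours_of_faceAdj hb hw (hb.removeP_involutive hs₁ hs₂ hne)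
    (hw.removeP_involutive hs₁ hs₂ hne) hzS fun t u ht hu hzt htu => ?_
  have hzu := hzt.of_faceAdj hb.1 hw.1 htu
  have ht' := mt (eq_of_sameFace_of_mem_pair hb.1 hw.1 h₁₂ hz · hzt) ht
  have hu' := mt (eq_of_sameFace_of_mem_pair hb.1 hw.1 h₁₂ hz · hzu) hu
  simp only [Finset.mem_insert, Finset.mem_singleton, not_or] at ht' hu'
  exact htu.removeP ht'.1 ht'.2 hu'.1 hu'.2

theorem sameFace_removeP_of_sameFace (hb : IsPairing S b) (hw : IsPairing S w) (hs₁ : s₁ ∈ S)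
    (hs₂ : s₂ ∈ S) (h₁₂ : ¬ SameFace b w s₁ s₂) (h : SameFace b w t u) :
    SameFace (removeP b s₁ s₂) (removeP w s₁ s₂)
      (if t ∈ ({s₁, s₂} : Finset α) then b t else t)
      (if u ∈ ({s₁, s₂} : Finset α) then b u else u) := by
  have hR := sameFace_equivalence hb.1 hw.1
  have hne : s₁ ≠ s₂ := fun h => h₁₂ (h ▸ hR.refl s₁)
  have hb' := hb.removeP_involutive hs₁ hs₂ hne
  have hw' := hw.removeP_involutive hs₁ hs₂ hne
  have hR' := sameFace_equivalence hb' hw'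
  have hS : ({s₁, s₂} : Finset α) ⊆ S :=
    Finset.insert_subset hs₁ (Finset.singleton_subset_iff.2 hs₂)
  have hout : ∀ {z v}, z ∈ ({s₁, s₂} : Finset α) → FaceAdj b w z v →
      v ∉ ({s₁, s₂} : Finset α) := fun {z v} hz hzv hv => by
      have hvz := eq_of_sameFace_of_mem_pair hb.1 hw.1 h₁₂ hz hv
        ((hR.refl z).of_faceAdj hb.1 hw.1 hzv)
      rcases hzv with rfl | rfl
      exacts [hb.apply_ne (hS hz) hvz, hw.apply_ne (hS hz) hvz]
  let ρ : α → α := fun z => if z ∈ ({s₁, s₂} : Finset α) then b z else z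
  refine reflTransGen_le_of_equivalence_of_le (hR'.comap ρ) ?_ t u
    ((sameFace_iff_reflTransGen hb.1 hw.1).1 h)
  intro x y hxy
  simp only [Function.onFun, ρ]
  by_cases hx : x ∈ ({s₁, s₂} : Finset α)
  · rw [if_pos hx, if_neg (hout hx hxy)]
    rcases hxy with rfl | rfl
    exacts [hR'.refl _, hR'.symm (sameFace_removeP_apply_apply hb hw hs₁ hs₂ h₁₂ hx)]
  by_cases hy : y ∈ ({s₁, s₂} : Finset α)
  · rw [if_neg hx, if_pos hy]
    rcases hxy.symm hb.1 hw.1 with rfl | rfl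
    exacts [hR'.refl _, sameFace_removeP_apply_apply hb hw hs₁ hs₂ h₁₂ hy]
  · rw [if_neg hx, if_neg hy]
    simp only [Finset.mem_insert, Finset.mem_singleton, not_or] at hx hy
    exact (sameFace_iff_reflTransGen hb' hw').2 (.single (hxy.removeP hx.1 hx.2 hy.1 hy.2))

theorem sameFace_removeP_iff (hb : IsPairing S b) (hw : IsPairing S w) (hs₁ : s₁ ∈ S)
    (hs₂ : s₂ ∈ S) (h₁₂ : ¬ SameFace b w s₁ s₂) (ht : t ∉ ({s₁, s₂} : Finset α))
    (hu : u ∉ ({s₁, s₂} : Finset α)) :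
    SameFace (removeP b s₁ s₂) (removeP w s₁ s₂) t u ↔
      MergeClasses (SameFace b w) s₁ s₂ t u := by
  have hR := sameFace_equivalence hb.1 hw.1
  have hne : s₁ ≠ s₂ := fun h => h₁₂ (h ▸ hR.refl s₁)
  have hb' := hb.removeP_involutive hs₁ hs₂ hne
  have hw' := hw.removeP_involutive hs₁ hs₂ hne
  have hR' := sameFace_equivalence hb' hw'
  refine ⟨mergeClasses_of_sameFace_removeP hb.1 hw.1 hb' hw', ?_⟩
  have transfer := fun {t u} (h : SameFace b w t u) =>
    sameFace_removeP_of_sameFace hb hw hs₁ hs₂ h₁₂ h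
  have hlink : SameFace (removeP b s₁ s₂) (removeP w s₁ s₂) (b s₁) (b s₂) := by
    have hbs₂ : b s₂ ≠ s₁ := fun h => h₁₂ (hR.symm (h ▸ sameFace_apply_left s₂))
    have h := sameFace_apply_left (b := removeP b s₁ s₂) (w := removeP w s₁ s₂) (b s₁)
    rwa [removeP_apply_apply_left hb.1 hne (hb.apply_ne hs₁) hbs₂ (hb.apply_ne hs₂)] at h
  have hclass : ∀ {z}, z ∉ ({s₁, s₂} : Finset α) → SameFace b w s₁ z ∨ SameFace b w s₂ z →
      SameFace (removeP b s₁ s₂) (removeP w s₁ s₂) z (b s₁) := by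
    intro z hz h
    rcases h with h | h
    · simpa [hz] using transfer (hR.symm h)
    · have h' := transfer (hR.symm h)
      rw [if_neg hz, if_pos (by simp)] at h'
      exact hR'.trans h' (hR'.symm hlink)
  rintro (h | ⟨htm, hum⟩)
  · simpa [ht, hu] using transfer h
  · exact hR'.trans (hclass ht htm) (hR'.symm (hclass hu hum))

end RemoveInterfaceEdge

theorem card_union_sdiff_pair {A B : Finset α} {s₁ s₂ : α} (h : Disjoint A B) (h₁ : s₁ ∈ A)
    (h₂ : s₂ ∈ B) : ((A ∪ B) \ {s₁, s₂}).card = A.card + B.card - 2 := by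
  have hne : s₁ ≠ s₂ := fun h' => Finset.disjoint_left.1 h h₁ (h' ▸ h₂)
  rw [Finset.card_sdiff_of_subset (Finset.insert_subset (Finset.mem_union_left _ h₁)
    (Finset.singleton_subset_iff.2 (Finset.mem_union_right _ h₂))),
    Finset.card_union_of_disjoint h, Finset.card_pair hne]

/-- interface edge removal: let `E₀ = {s₁, s₂}` (with `s₂ = e s₁`)
be an interface edge of the map `M = (S,b,w,e)`, whose edge-sides lie in the two
different faces `F₁` (of size `2r`) and `F₂` (of size `2r'`). Then the faces of
`M \ E₀` are obtained from those of `M` by replacing `F₁` and `F₂` by a single face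
of size `2(r + r' - 1)` (consisting of the remaining edge-sides of `F₁ ∪ F₂`),
all other faces being unchanged. -/
theorem faces_remove_interface_edge (S : Finset α) (b w e : Equiv.Perm α)
    (hb : IsPairing S b) (hw : IsPairing S w) (he : IsPairing S e)
    (s₁ s₂ : α) (hs₁ : s₁ ∈ S) (hedge : e s₁ = s₂)
    (hinterface : IsInterface b w s₁ s₂)
    (r r' : ℕ)
    (hsize₁ : (faceOf S b w s₁).card = 2 * r)
    (hsize₂ : (faceOf S b w s₂).card = 2 * r') :
    ((faceOf S b w s₁ ∪ faceOf S b w s₂) \ {s₁, s₂}).card = 2 * (r + r' - 1) ∧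
    faces (S \ {s₁, s₂}) (removeP b s₁ s₂) (removeP w s₁ s₂)
      = ((faces S b w).erase (faceOf S b w s₁)).erase (faceOf S b w s₂) ∪
          {(faceOf S b w s₁ ∪ faceOf S b w s₂) \ {s₁, s₂}} := by
  have hs₂ : s₂ ∈ S := hedge ▸ (he.apply_mem_iff s₁).2 hs₁
  have hR := sameFace_equivalence hb.1 hw.1
  have hmem : ∀ {s}, s ∈ S → s ∈ faceOf S b w s := fun hs =>
    Finset.mem_filter.2 ⟨hs, hR.refl _⟩
  constructor
  · have hdisj : Disjoint (faceOf S b w s₁) (faceOf S b w s₂) :=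
      Finset.disjoint_filter.2 fun _ _ h₁ h₂ => hinterface (hR.trans h₁ (hR.symm h₂))
    rw [card_union_sdiff_pair hdisj (hmem hs₁) (hmem hs₂), hsize₁, hsize₂]
    omega
  · have hbs₁ : b s₁ ∈ S \ {s₁, s₂} := by
      have h₂ : b s₁ ≠ s₂ := fun h => hinterface (h ▸ sameFace_apply_left s₁)
      simpa [(hb.apply_mem_iff s₁).2 hs₁, hb.apply_ne hs₁] using h₂
    exact image_filter_sdiff_pair hR
      (fun t u ht hu => sameFace_removeP_iff hb hw hs₁ hs₂ hinterface ht hu) hbs₁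
      (sameFace_apply_left s₁)
end
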